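/- Let f be L-Lipschitz with L > 1, X_{t+1} = f(X_t), and suppose ‖X̃_0 − X_0‖ = 0 (checkpoint) with quantization error ‖X̃_t − X_t‖ ≤ ε for all t ≥ 1. If a new checkpoint is created at the first time t with ‖X_{t+1} − X̃_t‖ > Δ_quant, then the number of iterates M in the frame satisfies M ≥ (log(Δ_quant − ε) − log δ)/log L, where δ = ‖X_1 − X_0‖ > 0 and δ ≤ Δ_quant − ε. -/
import Mathlib


/-- Lower bound on the number of iterates in a frame. -/
theorem stmt_2 {d : ℕ} (L ε Δquant : ℝ) (hL : 1 < L) (hε : 0 ≤ ε)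
    (f : EuclideanSpace ℝ (Fin d) → EuclideanSpace ℝ (Fin d))
    (hf : ∀ x y, ‖f x - f y‖ ≤ L * ‖x - y‖)
    (X Xr : ℕ → EuclideanSpace ℝ (Fin d))
    (hX : ∀ t, X (t + 1) = f (X t))
    (h0 : Xr 0 = X 0)
    (hquant : ∀ t ≥ 1, ‖Xr t - X t‖ ≤ ε)
    (δ : ℝ) (hδdef : δ = ‖X 1 - X 0‖) (hδpos : 0 < δ) (hδ : δ ≤ Δquant - ε)
    (M : ℕ)
    (hM : ‖X (M + 1) - Xr M‖ > Δquant)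
    (hMfirst : ∀ t < M, ‖X (t + 1) - Xr t‖ ≤ Δquant) :
    (M : ℝ) ≥ (Real.log (Δquant - ε) - Real.log δ) / Real.log L := by
  have hL0 : (0:ℝ) < L := lt_trans one_pos hL
  -- growth bound
  have hgrow : ∀ t, ‖X (t + 1) - X t‖ ≤ L ^ t * δ := by
    intro t
    induction t with
    | zero => simp [hδdef]
    | succ n ih =>
      have : ‖X (n + 2) - X (n + 1)‖ ≤ L * ‖X (n + 1) - X n‖ := by
        rw [hX (n+1), hX n]; exact hf _ _
      calc ‖X (n + 1 + 1) - X (n + 1)‖ ≤ L * ‖X (n + 1) - X n‖ := this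
        _ ≤ L * (L ^ n * δ) := by
            exact mul_le_mul_of_nonneg_left ih hL0.le
        _ = L ^ (n + 1) * δ := by ring
  -- error bound at M
  have herr : ‖Xr M - X M‖ ≤ ε := by
    rcases Nat.eq_zero_or_pos M with h | h
    · subst h; simp [h0, hε]
    · exact hquant M h
  have hkey : Δquant - ε < L ^ M * δ := by
    have h1 : ‖X (M + 1) - Xr M‖ ≤ ‖X (M + 1) - X M‖ + ‖Xr M - X M‖ := by
      have := norm_sub_le (X (M+1) - X M) (Xr M - X M)
      simpa [sub_sub_sub_cancel_right] using this
    have := lt_of_lt_of_le hM h1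
    have h2 : Δquant - ε < ‖X (M + 1) - X M‖ := by linarith
    linarith [hgrow M]
  have hΔε : 0 < Δquant - ε := lt_of_lt_of_le hδpos hδ
  have hlog : Real.log (Δquant - ε) < M * Real.log L + Real.log δ := by
    have := Real.log_lt_log hΔε hkey
    rwa [Real.log_mul (by positivity) hδpos.ne', Real.log_pow] at this
  have hlogL : 0 < Real.log L := Real.log_pos hL
  rw [ge_iff_le, div_le_iff₀ hlogL]
  nlinarith
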